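/- Under the standing hypotheses (Lipschitz fibre maps, exponential contraction along local stable fibres with rate α, and α·Q_f < 1), for each θ and each θ' in the local stable fibre of θ, the sequence of maps G_{θ,θ',n} : K_n(θ) → K_n(θ'), y ↦ f^n_{S^{−n}θ'} ∘ (f^n_{S^{−n}θ})⁻¹(y), is uniformly Cauchy on K(θ): for all n and k ≥ 0, d⁰(G_{θ,θ',n} ∘ G_{θ,θ',n+k}⁻¹, id) ≤ C'(αQ_f)^n d(θ,θ') where C' = αCL/(1 − αQ_f). Consequently, G_{θ,θ'} := lim_{n→∞} G_{θ,θ',n} exists uniformly on K(θ). -/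

import Mathlib

/-!
Write `g_n^ϑ := f^n_{S^{-n}ϑ}`. Since `g_{n+k}^ϑ = g_n^ϑ ∘ f^k_{S^{-(n+k)}ϑ}`, the estimate reduces
to comparing `f^k_{S^{-(n+k)}θ}` with `f^k_{S^{-(n+k)}θ'}`. Peeling off the outermost fibre map,
the difference at depth `n` is at most `Q_f` times the difference at depth `n + 1` plus
`L · d(S^{-(n+1)}θ, S^{-(n+1)}θ') ≤ L C α^{n+1} d(θ, θ')`; the bound `C'α^n d(θ, θ')` is exactly
stable under this recursion because `Q_f · αC' + αCL = C'`. Applying the `Q_f^n`-Lipschitz map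
`g_n^{θ'}` gives the Cauchy estimate, and completeness of `ℝ` gives the uniform limit on `K(θ)`,
where every `g_n^θ` is onto by the intermediate value theorem.
-/

open Set Filter Metric

/-- Iterates of the fibre maps: `fiter S f n θ = f_{S^{n-1}θ} ∘ ⋯ ∘ f_θ`. -/
def fiter {Θ : Type*} (S : Θ → Θ) (f : Θ → ℝ → ℝ) : ℕ → Θ → ℝ → ℝ
  | 0, _, y => y
  | n + 1, θ, y => f (S^[n] θ) (fiter S f n θ y)

open scoped NNReal Topology

theorem UniformCauchySeqOn.exists_tendstoUniformlyOn {ι α β : Type*} [Nonempty ι]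
    [SemilatticeSup ι] [UniformSpace β] [CompleteSpace β] {F : ι → α → β} {s : Set α}
    (hF : UniformCauchySeqOn F atTop s) : ∃ G : α → β, TendstoUniformlyOn F G atTop s := by
  refine ⟨fun x => @limUnder _ _ _ ⟨F (Classical.arbitrary ι) x⟩ atTop (F · x),
    hF.tendstoUniformlyOn_of_tendsto fun x hx => ?_⟩
  have : Nonempty β := ⟨F (Classical.arbitrary ι) x⟩
  exact (hF.cauchySeq hx).tendsto_limUnder

theorem uniformCauchySeqOn_of_dist_add_le {α β : Type*} [PseudoMetricSpace β]
    {F : ℕ → α → β} {s : Set α} {b : ℕ → ℝ}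
    (hF : ∀ n k, ∀ x ∈ s, dist (F n x) (F (n + k) x) ≤ b n) (hb : Tendsto b atTop (𝓝 0)) :
    UniformCauchySeqOn F atTop s := by
  rw [Metric.uniformCauchySeqOn_iff]
  intro ε hε
  obtain ⟨N, hN⟩ := eventually_atTop.1 (hb.eventually (gt_mem_nhds hε))
  refine ⟨N, fun m hm n hn x hx => ?_⟩
  rcases le_total m n with hmn | hnm
  · obtain ⟨k, rfl⟩ := Nat.exists_eq_add_of_le hmn
    exact (hF m k x hx).trans_lt (hN m hm)
  · obtain ⟨k, rfl⟩ := Nat.exists_eq_add_of_le hnm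
    rw [dist_comm]
    exact (hF n k x hx).trans_lt (hN n hn)

theorem Icc_subset_image_of_monotone_of_antitone {g : ℕ → ℝ → ℝ} {a b lo hi : ℝ} (hab : a ≤ b)
    (hg : ∀ n, ContinuousOn (g n) (Icc a b))
    (hmono : Monotone (g · a)) (hlo : Tendsto (g · a) atTop (𝓝 lo))
    (hanti : Antitone (g · b)) (hhi : Tendsto (g · b) atTop (𝓝 hi)) (n : ℕ) :
    Icc lo hi ⊆ g n '' Icc a b :=
  (Icc_subset_Icc (hmono.ge_of_tendsto hlo n) (hanti.le_of_tendsto hhi n)).trans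
    (intermediate_value_Icc hab (hg n))

section Iterates

variable {Θ : Type*} {S : Θ → Θ} {f : Θ → ℝ → ℝ} {s : Set ℝ}

theorem fiter_succ (n : ℕ) (θ : Θ) (y : ℝ) :
    fiter S f (n + 1) θ y = f (S^[n] θ) (fiter S f n θ y) := rfl

theorem fiter_add (n k : ℕ) (θ : Θ) (y : ℝ) :
    fiter S f (n + k) θ y = fiter S f n (S^[k] θ) (fiter S f k θ y) := by
  induction n with
  | zero => rw [Nat.zero_add]; rfl
  | succ n ih =>
    rw [Nat.add_right_comm, fiter_succ, ih, fiter_succ, Function.iterate_add_apply]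

theorem fiter_mapsTo (hf : ∀ θ, MapsTo (f θ) s s) (n : ℕ) (θ : Θ) :
    MapsTo (fiter S f n θ) s s := by
  induction n with
  | zero => exact mapsTo_id s
  | succ n ih => exact (hf _).comp ih

theorem fiter_strictMonoOn (hf : ∀ θ, MapsTo (f θ) s s) (hmono : ∀ θ, StrictMonoOn (f θ) s)
    (n : ℕ) (θ : Θ) : StrictMonoOn (fiter S f n θ) s := by
  induction n with
  | zero => exact strictMono_id.strictMonoOn s
  | succ n ih => exact (hmono _).comp ih (fiter_mapsTo hf n θ)

theorem fiter_continuousOn (hf : ∀ θ, MapsTo (f θ) s s) (hcont : ∀ θ, ContinuousOn (f θ) s)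
    (n : ℕ) (θ : Θ) : ContinuousOn (fiter S f n θ) s := by
  induction n with
  | zero => exact continuousOn_id
  | succ n ih => exact (hcont _).comp ih (fiter_mapsTo hf n θ)

theorem fiter_lipschitzOnWith {K : ℝ≥0} (hf : ∀ θ, MapsTo (f θ) s s)
    (hlip : ∀ θ, LipschitzOnWith K (f θ) s) (n : ℕ) (θ : Θ) :
    LipschitzOnWith (K ^ n) (fiter S f n θ) s := by
  induction n with
  | zero => exact LipschitzWith.id.lipschitzOnWith
  | succ n ih =>
    rw [pow_succ']
    exact (hlip _).comp ih (fiter_mapsTo hf n θ)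

end Iterates

section Pullback

variable {Θ : Type*} {S : Θ ≃ Θ} {f : Θ → ℝ → ℝ}

theorem Equiv.iterate_iterate_symm_add (S : Θ ≃ Θ) (m k : ℕ) (x : Θ) :
    S^[k] (S.symm^[m + k] x) = S.symm^[m] x := by
  rw [add_comm, Function.iterate_add_apply]
  exact S.right_inv.iterate k _

theorem fiter_succ_symm_iterate (n k : ℕ) (ϑ : Θ) (w : ℝ) :
    fiter S f (k + 1) (S.symm^[n + (k + 1)] ϑ) w
      = f (S.symm^[n + 1] ϑ) (fiter S f k (S.symm^[n + 1 + k] ϑ) w) := by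
  rw [show n + (k + 1) = n + 1 + k by omega, fiter_succ, S.iterate_iterate_symm_add]

theorem fiter_symm_iterate_add (n k : ℕ) (ϑ : Θ) (w : ℝ) :
    fiter S f (n + k) (S.symm^[n + k] ϑ) w
      = fiter S f n (S.symm^[n] ϑ) (fiter S f k (S.symm^[n + k] ϑ) w) := by
  rw [fiter_add, S.iterate_iterate_symm_add]

variable [PseudoMetricSpace Θ] {s : Set ℝ} {K : ℝ≥0} {L C α : ℝ} {θ θ' : Θ}

theorem abs_fiter_symm_iterate_sub_le (hf : ∀ ϑ, MapsTo (f ϑ) s s)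
    (hlip : ∀ ϑ, LipschitzOnWith K (f ϑ) s)
    (hL : 0 ≤ L) (hC : 0 ≤ C) (hα : 0 ≤ α)
    (hLip : ∀ ϑ ϑ' : Θ, ∀ y ∈ s, |f ϑ y - f ϑ' y| ≤ L * dist ϑ ϑ') (hαK : α * K < 1)
    (hstable : ∀ n : ℕ, 0 < n → dist (S.symm^[n] θ) (S.symm^[n] θ') ≤ C * α ^ n * dist θ θ')
    (k n : ℕ) {w : ℝ} (hw : w ∈ s) :
    |fiter S f k (S.symm^[n + k] θ) w - fiter S f k (S.symm^[n + k] θ') w|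
      ≤ α * C * L / (1 - α * K) * α ^ n * dist θ θ' := by
  have hαK' : 0 < 1 - α * K := sub_pos.2 hαK
  induction k generalizing n with
  | zero =>
    simp only [fiter, sub_self, abs_zero]
    positivity
  | succ k ih =>
    rw [fiter_succ_symm_iterate, fiter_succ_symm_iterate]
    set A := fiter S f k (S.symm^[n + 1 + k] θ) w
    set B := fiter S f k (S.symm^[n + 1 + k] θ') w
    have hB : B ∈ s := fiter_mapsTo hf k _ hw
    have hAB : |f (S.symm^[n + 1] θ) A - f (S.symm^[n + 1] θ) B| ≤ K * |A - B| := by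
      simpa only [Real.dist_eq] using (hlip _).dist_le_mul A (fiter_mapsTo hf k _ hw) B hB
    have hθθ' : |f (S.symm^[n + 1] θ) B - f (S.symm^[n + 1] θ') B|
        ≤ L * (C * α ^ (n + 1) * dist θ θ') :=
      (hLip _ _ B hB).trans (mul_le_mul_of_nonneg_left (hstable (n + 1) n.succ_pos) hL)
    calc _ ≤ |f (S.symm^[n + 1] θ) A - f (S.symm^[n + 1] θ) B|
            + |f (S.symm^[n + 1] θ) B - f (S.symm^[n + 1] θ') B| := abs_sub_le _ _ _
      _ ≤ K * (α * C * L / (1 - α * K) * α ^ (n + 1) * dist θ θ')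
            + L * (C * α ^ (n + 1) * dist θ θ') :=
          add_le_add (hAB.trans (mul_le_mul_of_nonneg_left (ih (n + 1)) K.2)) hθθ'
      _ = α * C * L / (1 - α * K) * α ^ n * dist θ θ' := by
          linear_combination (-(C * L * α ^ (n + 1) * dist θ θ')) * mul_inv_cancel₀ hαK'.ne'

theorem abs_fiter_symm_iterate_comp_sub_le (hf : ∀ ϑ, MapsTo (f ϑ) s s)
    (hlip : ∀ ϑ, LipschitzOnWith K (f ϑ) s)
    (hL : 0 ≤ L) (hC : 0 ≤ C) (hα : 0 ≤ α)
    (hLip : ∀ ϑ ϑ' : Θ, ∀ y ∈ s, |f ϑ y - f ϑ' y| ≤ L * dist ϑ ϑ') (hαK : α * K < 1)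
    (hstable : ∀ n : ℕ, 0 < n → dist (S.symm^[n] θ) (S.symm^[n] θ') ≤ C * α ^ n * dist θ θ')
    (n k : ℕ) {w : ℝ} (hw : w ∈ s) :
    |fiter S f n (S.symm^[n] θ') (fiter S f k (S.symm^[n + k] θ) w)
        - fiter S f (n + k) (S.symm^[n + k] θ') w|
      ≤ α * C * L / (1 - α * K) * (α * K) ^ n * dist θ θ' := by
  rw [fiter_symm_iterate_add]
  calc _ ≤ K ^ n * |fiter S f k (S.symm^[n + k] θ) w - fiter S f k (S.symm^[n + k] θ') w| := by
        simpa only [Real.dist_eq, NNReal.coe_pow] using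
          (fiter_lipschitzOnWith hf hlip n _).dist_le_mul _ (fiter_mapsTo hf k _ hw) _
            (fiter_mapsTo hf k _ hw)
    _ ≤ K ^ n * (α * C * L / (1 - α * K) * α ^ n * dist θ θ') :=
        mul_le_mul_of_nonneg_left
          (abs_fiter_symm_iterate_sub_le hf hlip hL hC hα hLip hαK hstable k n hw) (by positivity)
    _ = α * C * L / (1 - α * K) * (α * K) ^ n * dist θ θ' := by ring

end Pullback

theorem stmt3_general {Θ : Type*} [MetricSpace Θ]
    (S : Θ ≃ Θ) (M : ℝ) (hM : 0 < M)
    (f : Θ → ℝ → ℝ)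
    (hmaps : ∀ θ, MapsTo (f θ) (Icc (-M) M) (Ioo (-M) M))
    (hmono : ∀ θ, StrictMonoOn (f θ) (Icc (-M) M))
    (hC1 : ∀ θ, ContDiffOn ℝ 1 (f θ) (Icc (-M) M))
    (hpos : ∀ θ, ∀ y ∈ Icc (-M) M, 0 < derivWithin (f θ) (Icc (-M) M) y)
    (L C α Qf : ℝ) (hL : 0 ≤ L) (hC : 0 < C) (hα : α ∈ Ioo (0:ℝ) 1)
    (hLip : ∀ θ θ' : Θ, ∀ y ∈ Icc (-M) M, |f θ y - f θ' y| ≤ L * dist θ θ')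
    (hQf : ∀ θ, ∀ y ∈ Icc (-M) M, derivWithin (f θ) (Icc (-M) M) y ≤ Qf)
    (hαQ : α * Qf < 1)
    -- the bounding graphs φ⁻ ≤ φ⁺ as monotone pullback limits
    (φm φp : Θ → ℝ)
    (hφp : ∀ ϑ : Θ, Antitone (fun n => fiter S f n ((⇑S.symm)^[n] ϑ) M) ∧
      Tendsto (fun n => fiter S f n ((⇑S.symm)^[n] ϑ) M) atTop (nhds (φp ϑ)))
    (hφm : ∀ ϑ : Θ, Monotone (fun n => fiter S f n ((⇑S.symm)^[n] ϑ) (-M)) ∧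
      Tendsto (fun n => fiter S f n ((⇑S.symm)^[n] ϑ) (-M)) atTop (nhds (φm ϑ)))
    (θ θ' : Θ)
    (hstable : ∀ n : ℕ, 0 < n →
      dist ((⇑S.symm)^[n] θ) ((⇑S.symm)^[n] θ') ≤ C * α ^ n * dist θ θ') :
    (∀ n k : ℕ, ∀ w ∈ Icc (-M) M,
      |fiter S f n ((⇑S.symm)^[n] θ') (fiter S f k ((⇑S.symm)^[n + k] θ) w)
          - fiter S f (n + k) ((⇑S.symm)^[n + k] θ') w|
        ≤ (α * C * L / (1 - α * Qf)) * (α * Qf) ^ n * dist θ θ') ∧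
    ∃ G : ℝ → ℝ, TendstoUniformlyOn
      (fun n y => fiter S f n ((⇑S.symm)^[n] θ')
        (Function.invFunOn (fiter S f n ((⇑S.symm)^[n] θ)) (Icc (-M) M) y))
      G atTop (Icc (φm θ) (φp θ)) := by
  have h0 : (0 : ℝ) ∈ Icc (-M) M := ⟨by linarith, hM.le⟩
  obtain ⟨K, rfl⟩ : ∃ K : ℝ≥0, (K : ℝ) = Qf :=
    ⟨Qf.toNNReal, Real.coe_toNNReal _ ((hpos θ 0 h0).le.trans (hQf θ 0 h0))⟩
  have hI : ∀ ϑ, MapsTo (f ϑ) (Icc (-M) M) (Icc (-M) M) :=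
    fun ϑ => (hmaps ϑ).mono_right Ioo_subset_Icc_self
  have hlip : ∀ ϑ, LipschitzOnWith K (f ϑ) (Icc (-M) M) := fun ϑ =>
    (convex_Icc _ _).lipschitzOnWith_of_nnnorm_derivWithin_le
      ((hC1 ϑ).differentiableOn one_ne_zero) fun y hy => by
        rw [← NNReal.coe_le_coe, coe_nnnorm, Real.norm_of_nonneg (hpos ϑ y hy).le]
        exact hQf ϑ y hy
  have hcauchy := abs_fiter_symm_iterate_comp_sub_le hI hlip hL hC.le hα.1.le hLip hαQ hstable
  have hinj : ∀ n ϑ, InjOn (fiter S f n ϑ) (Icc (-M) M) :=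
    fun n ϑ => (fiter_strictMonoOn hI hmono n ϑ).injOn
  refine ⟨fun n k w hw => hcauchy n k hw, UniformCauchySeqOn.exists_tendstoUniformlyOn
    (uniformCauchySeqOn_of_dist_add_le
      (b := fun n => α * C * L / (1 - α * K) * (α * K) ^ n * dist θ θ') (fun n k y hy => ?_) ?_)⟩
  · obtain ⟨w, hw, rfl⟩ := Icc_subset_image_of_monotone_of_antitone (by linarith)
      (fun n => fiter_continuousOn hI (fun ϑ => (hC1 ϑ).continuousOn) n _)
      (hφm θ).1 (hφm θ).2 (hφp θ).1 (hφp θ).2 (n + k) hy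
    rw [Real.dist_eq, (hinj _ _).leftInvOn_invFunOn hw, fiter_symm_iterate_add,
      (hinj _ _).leftInvOn_invFunOn (fiter_mapsTo hI k _ hw)]
    exact hcauchy n k hw
  · simpa using ((tendsto_pow_atTop_nhds_zero_of_lt_one (mul_nonneg hα.1.le K.2) hαQ).const_mul
      (α * C * L / (1 - α * K))).mul_const (dist θ θ')

/-- first part of Proposition `theo:g`. Under the standing hypotheses, the maps
`G_{θ,θ',n} = f^n_{S^{-n}θ'} ∘ (f^n_{S^{-n}θ})⁻¹ : K_n(θ) → K_n(θ')` are uniformly Cauchy: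
`d⁰(G_{θ,θ',n} ∘ G_{θ,θ',n+k}⁻¹, id) ≤ C'(αQ_f)^n d(θ,θ')` with `C' = αCL/(1-αQ_f)`
(substituting `z = G_{θ,θ',n+k}(f^{n+k}_{S^{-(n+k)}θ} w) = f^{n+k}_{S^{-(n+k)}θ'} w`,
and using `f^{n+k}_{S^{-(n+k)}θ} = f^n_{S^{-n}θ} ∘ f^k_{S^{-(n+k)}θ}`, the bound reads
`|f^n_{S^{-n}θ'}(f^k_{S^{-(n+k)}θ} w) - f^{n+k}_{S^{-(n+k)}θ'} w| ≤ C'(αQ_f)^n d(θ,θ')`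
for all `w ∈ I`). Consequently `G_{θ,θ'} = lim_n G_{θ,θ',n}` exists uniformly on
`K(θ) = [φ⁻(θ), φ⁺(θ)]`. -/
theorem stmt3 {Θ : Type*} [MetricSpace Θ] [CompactSpace Θ]
    (S : Θ ≃ Θ) (M : ℝ) (hM : 0 < M)
    (f : Θ → ℝ → ℝ)
    (hmaps : ∀ θ, MapsTo (f θ) (Icc (-M) M) (Ioo (-M) M))
    (hmono : ∀ θ, StrictMonoOn (f θ) (Icc (-M) M))
    (hC1 : ∀ θ, ContDiffOn ℝ 1 (f θ) (Icc (-M) M))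
    (hpos : ∀ θ, ∀ y ∈ Icc (-M) M, 0 < derivWithin (f θ) (Icc (-M) M) y)
    (L C α Qf : ℝ) (hL : 0 ≤ L) (hC : 0 < C) (hα : α ∈ Ioo (0:ℝ) 1)
    (hLip : ∀ θ θ' : Θ, ∀ y ∈ Icc (-M) M, |f θ y - f θ' y| ≤ L * dist θ θ')
    (hQf : ∀ θ, ∀ y ∈ Icc (-M) M, derivWithin (f θ) (Icc (-M) M) y ≤ Qf)
    (hαQ : α * Qf < 1)
    -- the bounding graphs φ⁻ ≤ φ⁺ as monotone pullback limits
    (φm φp : Θ → ℝ)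
    (hφp : ∀ ϑ : Θ, Antitone (fun n => fiter S f n ((⇑S.symm)^[n] ϑ) M) ∧
      Tendsto (fun n => fiter S f n ((⇑S.symm)^[n] ϑ) M) atTop (nhds (φp ϑ)))
    (hφm : ∀ ϑ : Θ, Monotone (fun n => fiter S f n ((⇑S.symm)^[n] ϑ) (-M)) ∧
      Tendsto (fun n => fiter S f n ((⇑S.symm)^[n] ϑ) (-M)) atTop (nhds (φm ϑ)))
    (θ θ' : Θ)
    (hstable : ∀ n : ℕ, 0 < n →
      dist ((⇑S.symm)^[n] θ) ((⇑S.symm)^[n] θ') ≤ C * α ^ n * dist θ θ') :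
    (∀ n k : ℕ, ∀ w ∈ Icc (-M) M,
      |fiter S f n ((⇑S.symm)^[n] θ') (fiter S f k ((⇑S.symm)^[n + k] θ) w)
          - fiter S f (n + k) ((⇑S.symm)^[n + k] θ') w|
        ≤ (α * C * L / (1 - α * Qf)) * (α * Qf) ^ n * dist θ θ') ∧
    ∃ G : ℝ → ℝ, TendstoUniformlyOn
      (fun n y => fiter S f n ((⇑S.symm)^[n] θ')
        (Function.invFunOn (fiter S f n ((⇑S.symm)^[n] θ)) (Icc (-M) M) y))
      G atTop (Icc (φm θ) (φp θ)) :=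
  stmt3_general S M hM f hmaps hmono hC1 hpos L C α Qf hL hC hα hLip hQf hαQ φm φp hφp hφm θ θ'
    hstable
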